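/- Suppose a hole-free orthogonal polygon P with n vertices and r reflex vertices (n = 2r + 4, r odd) is split along an odd cut into pieces that are recursively guarded: any such recursive partition along odd cuts produces at most ⌊r/2⌋ + 1 = ⌊n/4⌋ L-shaped pieces. Formally: define f(r) for odd-cut recursion by f(0) = 1 and f(r) = f(r₁) + f(r₂) whenever r = r₁ + r₂ + 1 with r₁ odd; then for every binary tree of such splittings, the number of leaves is at most ⌊r/2⌋ + 1. -/
import Mathlib


/-- A recursion tree for partitioning along odd cuts: a leaf is allowed when the
reflex count is at most one; an internal node splits `r = r₁ + r₂ + 1` with `r₁` odd. -/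
inductive OddCutTree : ℕ → Type
  | leaf (r : ℕ) (h : r ≤ 1) : OddCutTree r
  | node (r₁ r₂ : ℕ) (h₁ : Odd r₁) (t₁ : OddCutTree r₁) (t₂ : OddCutTree r₂) :
      OddCutTree (r₁ + r₂ + 1)

/-- The number of leaves (L-shaped pieces) produced by the recursion. -/
def OddCutTree.leaves : ∀ {r : ℕ}, OddCutTree r → ℕ
  | _, .leaf _ _ => 1
  | _, .node _ _ _ t₁ t₂ => t₁.leaves + t₂.leaves

/-- Any recursive partition along odd cuts of a polygon with `r` reflex vertices
produces at most `⌊r/2⌋ + 1` L-shaped pieces. -/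
theorem oddCutTree_leaves_le (r : ℕ) (t : OddCutTree r) :
    t.leaves ≤ r / 2 + 1 := by
  induction t with
  | leaf r h => simp [OddCutTree.leaves]
  | node r₁ r₂ h₁ t₁ t₂ ih₁ ih₂ =>
    obtain ⟨k, hk⟩ := h₁
    simp only [OddCutTree.leaves]
    omega
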